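/- The existence of an infinite branch is not expressible in weak monadic second-order logic: there is no first-order sentence φ over the weak-MSO companion language of trees (a unary sort predicate, a binary membership relation, a binary order relation, and a unary root predicate) such that for every tree T, the weak-MSO companion of T satisfies φ if and only if there is a strictly increasing function f : ℕ → T. -/

import Mathlib

/-!
Ehrenfeucht–Fraïssé games on weak-MSO companions. Label the nodes of a tree with ranks, ordinals
`≤ ω²` (with `⊤` for `ω²`) that decrease strictly along branches except below a node of rank `⊤`.
With infinitely many tagged copies of every child, the tree of all such labellings has an infinite
branch, while its subtree without rank `⊤` below the root is well founded. Duplicator still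
survives `n` rounds on their companions by keeping a finite ancestor-closed partial isomorphism
whose ranks agree below `ω * n`: when finitely many new nodes of depth at most `K` are played, a new
node of rank `r` is answered by one of rank `min r (ω * (n - 1) + (K - depth))`, which agrees with
`r` below `ω * (n - 1)` and still decreases along branches.
-/

open FirstOrder

namespace Paper

/-- Extra relations for the (weak-)MSO companion: a sort predicate and a membership relation. -/
inductive MSORel : ℕ → Type
  | sort : MSORel 1
  | mem : MSORel 2

/-- The companion language: the relations of `L` together with a unary sort predicate
and a binary membership relation. -/
def msoLang (L : Language) : Language where
  Functions := L.Functions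
  Relations n := L.Relations n ⊕ MSORel n

/-- A language whose only function symbols are constants. -/
class ConstOnly (L : Language) : Prop where
  isEmpty : ∀ n, IsEmpty (L.Functions (n + 1))

instance (L : Language) [L.IsRelational] : ConstOnly L := ⟨fun _ => inferInstance⟩

/-- The weak-MSO companion structure of an `L`-structure `M`: the universe is `M ⊕ Finset M`. -/
def msoStructure (L : Language) (M : Type) [L.Structure M] [ConstOnly L] :
    (msoLang L).Structure (M ⊕ Finset M) where
  funMap {n} f := match n, f with
    | 0, f => fun _ => Sum.inl (Language.Structure.funMap (L := L) (M := M) f fun i => i.elim0)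
    | _ + 1, f => (ConstOnly.isEmpty (L := L) _).elim f
  RelMap {n} r := match n, r with
    | _, Sum.inl R => fun x => ∃ y, x = Sum.inl ∘ y ∧ Language.Structure.RelMap (L := L) R y
    | 1, Sum.inr MSORel.sort => fun x => ∃ a, x 0 = Sum.inl a
    | 2, Sum.inr MSORel.mem => fun x => ∃ a S, x 0 = Sum.inl a ∧ x 1 = Sum.inr S ∧ a ∈ S

instance msoStructureInst (L : Language) (M : Type) [L.Structure M] [ConstOnly L] :
    (msoLang L).Structure (M ⊕ Finset M) := msoStructure L M

/-- The companion structure with second sort ranging over the sets satisfying `P`. -/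
def setCompanion (L : Language) (M : Type) [L.Structure M] [ConstOnly L] (P : Set M → Prop) :
    (msoLang L).Structure (M ⊕ {S : Set M // P S}) where
  funMap {n} f := match n, f with
    | 0, f => fun _ => Sum.inl (Language.Structure.funMap (L := L) (M := M) f fun i => i.elim0)
    | _ + 1, f => (ConstOnly.isEmpty (L := L) _).elim f
  RelMap {n} r := match n, r with
    | _, Sum.inl R => fun x => ∃ y, x = Sum.inl ∘ y ∧ Language.Structure.RelMap (L := L) R y
    | 1, Sum.inr MSORel.sort => fun x => ∃ a, x 0 = Sum.inl a
    | 2, Sum.inr MSORel.mem => fun x => ∃ a S, x 0 = Sum.inl a ∧ x 1 = Sum.inr S ∧ a ∈ S.val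

instance setCompanionInst (L : Language) (M : Type) [L.Structure M] [ConstOnly L]
    (P : Set M → Prop) : (msoLang L).Structure (M ⊕ {S : Set M // P S}) :=
  setCompanion L M P

/-- Extra symbols for the Shelah-Stupp iteration: the prefix order. -/
inductive IterRel : ℕ → Type
  | pre : IterRel 2

/-- The language of the Shelah-Stupp iteration: lifted relations of `L`,
a binary prefix order, and a constant (for the empty word). -/
def iterLang (L : Language) : Language where
  Functions n := match n with
    | 0 => Unit
    | _ + 1 => Empty
  Relations n := L.Relations n ⊕ IterRel n

instance (L : Language) : ConstOnly (iterLang L) := ⟨fun _ => inferInstanceAs (IsEmpty Empty)⟩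

/-- The Shelah-Stupp iteration `𝔄*` of an `L`-structure `A`: the universe is `List A`,
with the prefix order, the lifted relations and the empty word as constant. -/
instance iterStructure (L : Language) (A : Type) [L.Structure A] :
    (iterLang L).Structure (List A) where
  funMap {n} f := match n, f with
    | 0, _ => fun _ => ([] : List A)
    | _ + 1, f => f.elim
  RelMap {n} r := match n, r with
    | _, Sum.inl R => fun x =>
        ∃ (u : List A) (y : Fin _ → A), (∀ i, x i = u ++ [y i]) ∧ Language.Structure.RelMap (L := L) R y
    | 2, Sum.inr IterRel.pre => fun x => x 0 <+: x 1

end Paper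
namespace Paper

/-- The language of trees: a binary order relation and a unary root predicate. -/
inductive TreeRel : ℕ → Type
  | le : TreeRel 2
  | root : TreeRel 1

/-- The language of trees. -/
def treeLang : Language where
  Functions _ := Empty
  Relations := TreeRel

instance : treeLang.IsRelational := fun _ => inferInstanceAs (IsEmpty Empty)

/-- A set of words, viewed as a tree-structure with the prefix relation and the root
predicate holding exactly at the empty word. -/
instance prefixTreeStructure {α : Type} (T : Set (List α)) : treeLang.Structure ↥T where
  funMap f := f.elim
  RelMap {n} r := match n, r with
    | 2, TreeRel.le => fun x => (x 0).val <+: (x 1).val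
    | 1, TreeRel.root => fun x => (x 0).val = []

/-- Extra relations for the Muchnik iteration: the prefix order of the iteration
and the clone predicate. -/
inductive MuchRel : ℕ → Type
  | pre : MuchRel 2
  | clone : MuchRel 1

/-- The language of the Muchnik iteration: the lifted relations of `L`, the prefix order,
the clone predicate, and a constant (for the empty sequence). -/
def muchLang (L : Language) : Language where
  Functions n := match n with
    | 0 => Unit
    | _ + 1 => Empty
  Relations n := L.Relations n ⊕ MuchRel n

instance (L : Language) : ConstOnly (muchLang L) := ⟨fun _ => inferInstanceAs (IsEmpty Empty)⟩

/-- The prefix relation on finite and infinite sequences. -/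
def InfPrefix {A : Type} : (List A ⊕ (ℕ → A)) → (List A ⊕ (ℕ → A)) → Prop
  | Sum.inl u, Sum.inl v => u <+: v
  | Sum.inl u, Sum.inr s => ∀ i : Fin u.length, u.get i = s i
  | Sum.inr _, Sum.inl _ => False
  | Sum.inr s, Sum.inr s' => s = s'

/-- The infinitary Muchnik iteration `(𝔄^∞, clone)` of an `L`-structure `A`: the universe is
`List A ⊕ (ℕ → A)` (finite and infinite sequences over `A`), with the prefix relation, the
lifted relations, the empty sequence as constant, and the clone predicate. -/
instance muchInfStructure (L : Language) (A : Type) [L.Structure A] :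
    (muchLang L).Structure (List A ⊕ (ℕ → A)) where
  funMap {n} f := match n, f with
    | 0, _ => fun _ => (Sum.inl [] : List A ⊕ (ℕ → A))
    | _ + 1, f => f.elim
  RelMap {n} r := match n, r with
    | _, Sum.inl R => fun x => ∃ (u : List A) (y : Fin _ → A),
        (∀ i, x i = Sum.inl (u ++ [y i])) ∧ Language.Structure.RelMap (L := L) R y
    | 2, Sum.inr MuchRel.pre => fun x => InfPrefix (x 0) (x 1)
    | 1, Sum.inr MuchRel.clone => fun x => ∃ (u : List A) (c : A), x 0 = Sum.inl (u ++ [c, c])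

/-- The tree `T_ω`: all words over `ℕ × ℕ` whose sequence of second components is strictly
decreasing. -/
def Tomega : Set (List (ℕ × ℕ)) := {w | List.Chain' (· > ·) (w.map Prod.snd)}

end Paper

namespace Paper

/-- A tree is a partial order with a least element (the root) in which every
principal downset is finite and linearly ordered. -/
structure IsTree (V : Type) [PartialOrder V] [OrderBot V] : Prop where
  finite_below : ∀ v : V, {u : V | u ≤ v}.Finite
  linear_below : ∀ v u w : V, u ≤ v → w ≤ v → u ≤ w ∨ w ≤ u

/-- A partial order with a least element, viewed as a structure for the tree language. -/
instance orderTreeStructure (V : Type) [PartialOrder V] [OrderBot V] :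
    treeLang.Structure V where
  funMap f := f.elim
  RelMap {n} r := match n, r with
    | 2, TreeRel.le => fun x => x 0 ≤ x 1
    | 1, TreeRel.root => fun x => x 0 = ⊥

open Language Structure

section BackAndForth

variable {L : Language} [L.IsRelational] {M N : Type*} [L.Structure M] [L.Structure N]

theorem exists_eq_var_of_isRelational {k : ℕ} (t : L.Term (Empty ⊕ Fin k)) :
    ∃ i, t = Term.var (Sum.inr i) := by
  rcases t with (e | i) | ⟨f, _⟩
  · exact e.elim
  · exact ⟨i, rfl⟩
  · exact isEmptyElim f

variable (L) in
def AtomicEquiv {k : ℕ} (v : Fin k → M) (w : Fin k → N) : Prop :=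
  (∀ i j, v i = v j ↔ w i = w j) ∧
    ∀ {l : ℕ} (r : L.Relations l) (σ : Fin l → Fin k),
      RelMap r (v ∘ σ) ↔ RelMap r (w ∘ σ)

theorem exists_realize_iff_of_backAndForth
    (G : ℕ → (k : ℕ) → (Fin k → M) → (Fin k → N) → Prop)
    (atomic : ∀ n k v w, G n k v w → AtomicEquiv L v w)
    (forth : ∀ n k v w, G (n + 1) k v w →
      ∀ a, ∃ c, G n (k + 1) (Fin.snoc v a) (Fin.snoc w c))
    (back : ∀ n k v w, G (n + 1) k v w →
      ∀ c, ∃ a, G n (k + 1) (Fin.snoc v a) (Fin.snoc w c))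
    (e₁ : Empty → M) (e₂ : Empty → N) {k : ℕ} (φ : L.BoundedFormula Empty k) :
    ∃ q, ∀ n, q ≤ n → ∀ v w, G n k v w → (φ.Realize e₁ v ↔ φ.Realize e₂ w) := by
  induction φ with
  | falsum => exact ⟨0, fun _ _ _ _ _ => Iff.rfl⟩
  | equal t₁ t₂ =>
    obtain ⟨i, rfl⟩ := exists_eq_var_of_isRelational t₁
    obtain ⟨j, rfl⟩ := exists_eq_var_of_isRelational t₂
    exact ⟨0, fun n _ v w h => (atomic n _ v w h).1 i j⟩
  | rel r ts =>
    choose σ hσ using fun i => exists_eq_var_of_isRelational (ts i)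
    obtain rfl : ts = fun i => Term.var (Sum.inr (σ i)) := funext hσ
    exact ⟨0, fun n _ v w h => (atomic n _ v w h).2 r σ⟩
  | imp φ ψ ihφ ihψ =>
    obtain ⟨q₁, h₁⟩ := ihφ
    obtain ⟨q₂, h₂⟩ := ihψ
    exact ⟨max q₁ q₂, fun n hn v w h =>
      imp_congr (h₁ n (le_of_max_le_left hn) v w h) (h₂ n (le_of_max_le_right hn) v w h)⟩
  | all φ ih =>
    obtain ⟨q, hq⟩ := ih
    refine ⟨q + 1, fun n hn v w h => ?_⟩
    obtain ⟨m, rfl⟩ : ∃ m, n = m + 1 := ⟨n - 1, by omega⟩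
    simp only [BoundedFormula.realize_all]
    constructor
    · intro hv c
      obtain ⟨a, ha⟩ := back m _ v w h c
      exact (hq m (by omega) _ _ ha).1 (hv a)
    · intro hw a
      obtain ⟨c, hc⟩ := forth m _ v w h a
      exact (hq m (by omega) _ _ hc).2 (hw c)

theorem elementarilyEquivalent_of_backAndForth
    (G : ℕ → (k : ℕ) → (Fin k → M) → (Fin k → N) → Prop)
    (atomic : ∀ n k v w, G n k v w → AtomicEquiv L v w)
    (forth : ∀ n k v w, G (n + 1) k v w →
      ∀ a, ∃ c, G n (k + 1) (Fin.snoc v a) (Fin.snoc w c))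
    (back : ∀ n k v w, G (n + 1) k v w →
      ∀ c, ∃ a, G n (k + 1) (Fin.snoc v a) (Fin.snoc w c))
    (init : ∀ n, G n 0 default default) :
    M ≅[L] N :=
  elementarilyEquivalent_iff.2 fun φ =>
    have ⟨q, hq⟩ := exists_realize_iff_of_backAndForth G atomic forth back default default φ
    hq q le_rfl _ _ (init q)

end BackAndForth

section Companion

variable {α β : Type*}

def FinsetRel (R : α → β → Prop) (S : Finset α) (T : Finset β) : Prop :=
  (∀ a ∈ S, ∃ c ∈ T, R a c) ∧ ∀ c ∈ T, ∃ a ∈ S, R a c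

def companionRel (R : α → β → Prop) : α ⊕ Finset α → β ⊕ Finset β → Prop :=
  Sum.LiftRel R (FinsetRel R)

variable {R R' : α → β → Prop}

theorem FinsetRel.mem_iff (hR : Relator.BiUnique R) {S : Finset α} {T : Finset β} {a : α}
    {c : β} (hST : FinsetRel R S T) (hac : R a c) : a ∈ S ↔ c ∈ T :=
  ⟨fun ha => have ⟨_, hc', hac'⟩ := hST.1 a ha; hR.2 hac' hac ▸ hc',
    fun hc => have ⟨_, ha', ha'c⟩ := hST.2 c hc; hR.1 ha'c hac ▸ ha'⟩

theorem FinsetRel.biUnique (hR : Relator.BiUnique R) : Relator.BiUnique (FinsetRel R) := by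
  refine ⟨fun S S' T h h' => Finset.ext fun a => ⟨fun ha => ?_, fun ha => ?_⟩,
    fun S T T' h h' => Finset.ext fun c => ⟨fun hc => ?_, fun hc => ?_⟩⟩
  · obtain ⟨c, hc, hac⟩ := h.1 a ha
    exact (h'.mem_iff hR hac).2 hc
  · obtain ⟨c, hc, hac⟩ := h'.1 a ha
    exact (h.mem_iff hR hac).2 hc
  · obtain ⟨a, ha, hac⟩ := h.2 c hc
    exact (h'.mem_iff hR hac).1 ha
  · obtain ⟨a, ha, hac⟩ := h'.2 c hc
    exact (h.mem_iff hR hac).1 ha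

theorem exists_finsetRel (S : Finset α) (h : ∀ a ∈ S, ∃ c, R a c) :
    ∃ T, FinsetRel R S T := by
  classical
  refine ⟨S.attach.image fun a => (h a.1 a.2).choose, fun a ha => ⟨_, Finset.mem_image_of_mem _
    (Finset.mem_attach S ⟨a, ha⟩), (h a ha).choose_spec⟩, fun c hc => ?_⟩
  obtain ⟨⟨a, ha⟩, -, rfl⟩ := Finset.mem_image.1 hc
  exact ⟨a, ha, (h a ha).choose_spec⟩

theorem companionRel_biUnique (hR : Relator.BiUnique R) : Relator.BiUnique (companionRel R) := by
  have hS := FinsetRel.biUnique hR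
  refine ⟨?_, ?_⟩
  · rintro _ _ _ (⟨h⟩ | ⟨h⟩) (⟨h'⟩ | ⟨h'⟩)
    · exact congrArg Sum.inl (hR.1 h h')
    · exact congrArg Sum.inr (hS.1 h h')
  · rintro _ _ _ (⟨h⟩ | ⟨h⟩) (⟨h'⟩ | ⟨h'⟩)
    · exact congrArg Sum.inl (hR.2 h h')
    · exact congrArg Sum.inr (hS.2 h h')

theorem companionRel_flip {x : α ⊕ Finset α} {y : β ⊕ Finset β} :
    companionRel (flip R) y x ↔ companionRel R x y := by
  cases x <;> cases y <;> simp [companionRel, FinsetRel, flip, and_comm]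

theorem companionRel_mono (h : R ≤ R') : companionRel R ≤ companionRel R' :=
  fun _ _ => Sum.LiftRel.mono h fun _ _ hST =>
    ⟨fun a ha => (hST.1 a ha).imp fun _ => And.imp_right (h _ _),
      fun c hc => (hST.2 c hc).imp fun _ => And.imp_right (h _ _)⟩

theorem companionRel_inl_iff {a : α} {y : β ⊕ Finset β} :
    companionRel R (Sum.inl a) y ↔ ∃ c, y = Sum.inl c ∧ R a c := by
  cases y <;> simp [companionRel]

theorem companionRel_inr_iff {S : Finset α} {y : β ⊕ Finset β} :
    companionRel R (Sum.inr S) y ↔ ∃ T, y = Sum.inr T ∧ FinsetRel R S T := by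
  cases y <;> simp [companionRel]

theorem exists_companionRel (x : α ⊕ Finset α)
    (h : ∀ a ∈ Sum.elim (fun a => {a}) id x, ∃ c, R a c) : ∃ y, companionRel R x y := by
  rcases x with a | S
  · obtain ⟨c, hc⟩ := h a (Finset.mem_singleton_self a)
    exact ⟨Sum.inl c, Sum.LiftRel.inl hc⟩
  · obtain ⟨T, hT⟩ := exists_finsetRel S h
    exact ⟨Sum.inr T, Sum.LiftRel.inr hT⟩

theorem forall_snoc_rel {r : α → β → Prop} {k : ℕ} {v : Fin k → α} {w : Fin k → β}
    {a : α} {c : β} (h : ∀ i, r (v i) (w i)) (hac : r a c) :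
    ∀ i, r (Fin.snoc (α := fun _ => α) v a i) (Fin.snoc (α := fun _ => β) w c i) :=
  Fin.lastCases (by simpa using hac) fun i => by simpa using h i

end Companion

section PartialIso

variable {L : Language} {M N : Type} [L.Structure M] [L.Structure N] {R : M → N → Prop}

variable (L) in
structure IsPartialIso (R : M → N → Prop) : Prop where
  biUnique : Relator.BiUnique R
  relMap_iff : ∀ {l : ℕ} (r : L.Relations l) (x : Fin l → M) (y : Fin l → N),
    (∀ i, R (x i) (y i)) → (RelMap r x ↔ RelMap r y)

theorem IsPartialIso.flip (h : IsPartialIso L R) : IsPartialIso L (flip R) :=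
  ⟨⟨fun _ _ _ h₁ h₂ => h.biUnique.2 h₁ h₂,
      fun _ _ _ h₁ h₂ => h.biUnique.1 h₁ h₂⟩,
    fun r x y hxy => (h.relMap_iff r y x hxy).symm⟩

variable [L.IsRelational]

instance : (msoLang L).IsRelational := ‹L.IsRelational›

theorem IsPartialIso.companion_relMap (h : IsPartialIso L R) {l : ℕ} (r : (msoLang L).Relations l)
    {x : Fin l → M ⊕ Finset M} {y : Fin l → N ⊕ Finset N}
    (hxy : ∀ i, companionRel R (x i) (y i)) (hx : RelMap r x) : RelMap r y := by
  rcases r with r | _ | _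
  · obtain ⟨x, rfl, hx⟩ := hx
    choose z hyz hxz using fun i => companionRel_inl_iff.1 (hxy i)
    exact ⟨z, funext hyz, (h.relMap_iff r x z hxz).1 hx⟩
  · obtain ⟨a, ha⟩ := hx
    obtain ⟨c, hc, -⟩ := companionRel_inl_iff.1 (ha ▸ hxy 0)
    exact ⟨c, hc⟩
  · obtain ⟨a, S, ha, hS, haS⟩ := hx
    obtain ⟨c, hc, hac⟩ := companionRel_inl_iff.1 (ha ▸ hxy 0)
    obtain ⟨T, hT, hST⟩ := companionRel_inr_iff.1 (hS ▸ hxy 1)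
    exact ⟨c, T, hc, hT, (hST.mem_iff h.biUnique hac).1 haS⟩

theorem IsPartialIso.atomicEquiv (h : IsPartialIso L R) {k : ℕ} {v : Fin k → M ⊕ Finset M}
    {w : Fin k → N ⊕ Finset N} (hvw : ∀ i, companionRel R (v i) (w i)) :
    AtomicEquiv (msoLang L) v w :=
  ⟨fun i j => Relator.rel_eq (companionRel_biUnique h.biUnique) (hvw i) (hvw j),
    fun r σ => ⟨h.companion_relMap r fun i => hvw (σ i),
      h.flip.companion_relMap r fun i => companionRel_flip.2 (hvw (σ i))⟩⟩

theorem companion_elementarilyEquivalent (P : ℕ → (M → N → Prop) → Prop)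
    (iso : ∀ n R, P n R → IsPartialIso L R)
    (forth : ∀ n R, P (n + 1) R →
      ∀ E : Finset M, ∃ R', R ≤ R' ∧ P n R' ∧ ∀ a ∈ E, ∃ c, R' a c)
    (back : ∀ n R, P (n + 1) R →
      ∀ E : Finset N, ∃ R', R ≤ R' ∧ P n R' ∧ ∀ c ∈ E, ∃ a, R' a c)
    (init : ∀ n, ∃ R, P n R) :
    (M ⊕ Finset M) ≅[msoLang L] (N ⊕ Finset N) := by
  refine elementarilyEquivalent_of_backAndForth
    (fun n _ v w => ∃ R, P n R ∧ ∀ i, companionRel R (v i) (w i))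
    (fun n _ _ _ ⟨R, hR, hvw⟩ => (iso n R hR).atomicEquiv hvw) ?_ ?_ fun n => ?_
  · rintro n k v w ⟨R, hR, hvw⟩ x
    obtain ⟨R', hRR', hR', hcov⟩ := forth n R hR (Sum.elim (fun a => {a}) id x)
    obtain ⟨y, hxy⟩ := exists_companionRel x hcov
    exact ⟨y, R', hR', forall_snoc_rel (fun i => companionRel_mono hRR' _ _ (hvw i)) hxy⟩
  · rintro n k v w ⟨R, hR, hvw⟩ y
    obtain ⟨R', hRR', hR', hcov⟩ := back n R hR (Sum.elim (fun c => {c}) id y)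
    obtain ⟨x, hxy⟩ := exists_companionRel (R := flip R') y hcov
    exact ⟨x, R', hR', forall_snoc_rel (fun i => companionRel_mono hRR' _ _ (hvw i))
      (companionRel_flip.1 hxy)⟩
  · obtain ⟨R, hR⟩ := init n
    exact ⟨R, hR, finZeroElim⟩

end PartialIso

theorem isPartialIso_treeLang {V₁ V₂ : Type} [PartialOrder V₁] [OrderBot V₁]
    [PartialOrder V₂] [OrderBot V₂] {R : V₁ → V₂ → Prop} (hR : Relator.BiUnique R)
    (hle : ∀ ⦃a c a' c'⦄, R a c → R a' c' → (a ≤ a' ↔ c ≤ c'))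
    (hbot : ∀ ⦃a c⦄, R a c → (a = ⊥ ↔ c = ⊥)) : IsPartialIso treeLang R :=
  ⟨hR, fun r _ _ hxy => by cases r; exacts [hle (hxy 0) (hxy 1), hbot (hxy 0)]⟩

section Rank

abbrev Rank : Type := WithTop (ℕ ×ₗ ℕ)

instance : DecidableEq Rank := inferInstanceAs (DecidableEq (Option (ℕ × ℕ)))

instance : Encodable Rank := inferInstanceAs (Encodable (Option (ℕ × ℕ)))

/-- The ordinal `ω * a + b`. -/
def ord (a b : ℕ) : Rank := (toLex (a, b) : ℕ ×ₗ ℕ)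

theorem ord_lt_ord {a b c d : ℕ} : ord a b < ord c d ↔ a < c ∨ a = c ∧ b < d := by
  rw [ord, ord, WithTop.coe_lt_coe, Prod.Lex.lt_iff]
  rfl

theorem ord_le_ord {a b c d : ℕ} : ord a b ≤ ord c d ↔ a < c ∨ a = c ∧ b ≤ d := by
  rw [ord, ord, WithTop.coe_le_coe, Prod.Lex.le_iff]
  rfl

theorem ord_ne_top (a b : ℕ) : ord a b ≠ ⊤ := WithTop.coe_ne_top

theorem ord_lt_ord_succ_zero (n k : ℕ) : ord n k < ord (n + 1) 0 :=
  ord_lt_ord.2 (Or.inl n.lt_succ_self)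

theorem ord_zero_le (n k : ℕ) : ord n 0 ≤ ord n k := ord_le_ord.2 (Or.inr ⟨rfl, k.zero_le⟩)

def RankSim (n : ℕ) (r s : Rank) : Prop := r = s ∨ ord n 0 ≤ r ∧ ord n 0 ≤ s

variable {m n : ℕ} {r s c : Rank}

theorem RankSim.mono (h : RankSim n r s) (hmn : m ≤ n) : RankSim m r s := by
  have : ord m 0 ≤ ord n 0 := ord_le_ord.2 (hmn.lt_or_eq.imp_right fun h => ⟨h, le_rfl⟩)
  exact h.imp_right fun h => ⟨this.trans h.1, this.trans h.2⟩

theorem rankSim_min_ord (n k : ℕ) (r : Rank) : RankSim n r (min r (ord n k)) := by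
  by_cases hr : r < ord n 0
  · exact Or.inl (min_eq_left (hr.le.trans (ord_zero_le n k))).symm
  · exact Or.inr ⟨not_lt.1 hr, le_min (not_lt.1 hr) (ord_zero_le n k)⟩

theorem RankSim.min_ord_lt (h : RankSim (n + 1) r s) (hc : c < r ∨ r = ⊤) (k : ℕ) :
    min c (ord n k) < s ∨ s = ⊤ := by
  rcases h with rfl | ⟨-, hs⟩
  · exact hc.imp_left (min_le_left _ _).trans_lt
  · exact Or.inl ((min_le_right _ _).trans_lt ((ord_lt_ord_succ_zero n k).trans_le hs))

theorem min_lt_min_of_lt_or_eq_top {α : Type*} [LinearOrder α] [OrderTop α] {a b c d : α}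
    (hab : a < b ∨ b = ⊤) (hcd : c < d) : min a c < min b d := by
  rcases hab with hab | rfl
  · exact min_lt_min hab hcd
  · exact (min_le_right a c).trans_lt (by rwa [min_top_left])

end Rank

/-- Letters are pairs (tag, rank); a word lists the letters of a node deepest first, so that
the parent of a node is its tail and the tree order is the suffix order. -/
abbrev Word : Type := List (ℕ × Rank)

def rank : Word → Rank
  | [] => ⊤
  | l :: _ => l.2

def Valid (b : Bool) : Word → Prop
  | [] => True
  | l :: w => (l.2 < rank w ∨ rank w = ⊤) ∧ (b = false → l.2 ≠ ⊤) ∧ Valid b w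

theorem Valid.of_suffix {b : Bool} {u w : Word} (hw : Valid b w) (hu : u <:+ w) : Valid b u := by
  induction w with
  | nil => rwa [List.suffix_nil.1 hu]
  | cons l w ih =>
    rcases List.suffix_cons_iff.1 hu with rfl | hu
    exacts [hw, ih hw.2.2 hu]

theorem Valid.rank_le_of_suffix {u w : Word} (hw : Valid false w) (hu : u <:+ w) :
    rank w ≤ rank u := by
  induction w with
  | nil => rw [List.suffix_nil.1 hu]
  | cons l w ih =>
    rcases List.suffix_cons_iff.1 hu with rfl | hu
    · exact le_rfl
    · exact (hw.1.elim le_of_lt fun h => h ▸ le_top).trans (ih hw.2.2 hu)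

theorem Valid.rank_lt_of_suffix {l : ℕ × Rank} {u w : Word} (hw : Valid false (l :: w))
    (hu : u <:+ w) : rank (l :: w) < rank u :=
  (hw.1.elim id fun h => h ▸ (hw.2.1 rfl).lt_top).trans_le (hw.2.2.rank_le_of_suffix hu)

def RankTree (b : Bool) : Type := {w : Word // Valid b w}

namespace RankTree

variable {b : Bool}

instance : PartialOrder (RankTree b) where
  le u v := u.1 <:+ v.1
  le_refl u := List.suffix_refl u.1
  le_trans _ _ _ := List.IsSuffix.trans
  le_antisymm _ _ h h' := Subtype.ext (h.eq_of_length (h.length_le.antisymm h'.length_le))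

instance : OrderBot (RankTree b) where
  bot := ⟨[], trivial⟩
  bot_le u := List.nil_suffix (l := u.1)

theorem eq_bot_iff_val {u : RankTree b} : u = ⊥ ↔ u.1 = [] := Subtype.ext_iff

theorem isTree : IsTree (RankTree b) where
  finite_below v := (v.1.tails.finite_toSet.preimage Subtype.val_injective.injOn).subset
    fun _ hu => (List.mem_tails _ _).2 hu
  linear_below _ _ _ hu hw := List.suffix_or_suffix_of_suffix hu hw

theorem valid_replicate (k : ℕ) : Valid true (List.replicate k (0, ⊤)) := by
  induction k with
  | zero => trivial
  | succ k ih => exact ⟨Or.inr (by cases k <;> rfl), nofun, ih⟩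

theorem exists_strictMono_of_true : ∃ f : ℕ → RankTree true, StrictMono f :=
  ⟨fun k => ⟨List.replicate k (0, ⊤), valid_replicate k⟩, strictMono_nat_of_lt_succ fun k =>
    lt_of_le_of_ne (List.suffix_cons _ _) fun h => by simpa using congrArg (·.1.length) h⟩

theorem rank_strictAnti : StrictAnti fun v : RankTree false => rank v.1 := by
  rintro _ ⟨(_ | ⟨l, w⟩), hv⟩ huv
  · exact absurd (Subtype.ext (List.suffix_nil.1 huv.le)) huv.ne
  · rcases List.suffix_cons_iff.1 huv.le with h | h
    · exact absurd (Subtype.ext h) huv.ne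
    · exact hv.rank_lt_of_suffix h

theorem not_exists_strictMono_of_false : ¬ ∃ f : ℕ → RankTree false, StrictMono f := by
  rintro ⟨f, hf⟩
  obtain ⟨k, hk⟩ := WellFounded.not_rel_apply_succ (r := (· < ·)) fun k => rank (f k).1
  exact hk (rank_strictAnti (hf k.lt_succ_self))

end RankTree

/-- Duplicator's invariant with `n` rounds to go. -/
structure IsRankIso (b₁ b₂ : Bool) (n : ℕ) (F : Finset (Word × Word)) : Prop where
  nil_mem : ([], []) ∈ F
  tail_mem : ∀ p ∈ F, (p.1.tail, p.2.tail) ∈ F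
  valid_fst : ∀ p ∈ F, Valid b₁ p.1
  valid_snd : ∀ p ∈ F, Valid b₂ p.2
  length_eq : ∀ p ∈ F, p.1.length = p.2.length
  fst_eq_iff : ∀ p ∈ F, ∀ q ∈ F, p.1 = q.1 ↔ p.2 = q.2
  rankSim : ∀ p ∈ F, RankSim n (rank p.1) (rank p.2)

def swapPairs (F : Finset (Word × Word)) : Finset (Word × Word) :=
  F.map (Equiv.prodComm Word Word).toEmbedding

theorem mem_swapPairs {F : Finset (Word × Word)} {x y : Word} :
    (x, y) ∈ swapPairs F ↔ (y, x) ∈ F :=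
  Finset.mem_map_equiv

theorem isRankIso_singleton (b₁ b₂ : Bool) (n : ℕ) : IsRankIso b₁ b₂ n {([], [])} where
  nil_mem := Finset.mem_singleton_self _
  tail_mem := by simp
  valid_fst := by simp [Valid]
  valid_snd := by simp [Valid]
  length_eq := by simp
  fst_eq_iff := by simp
  rankSim := by simp [RankSim]

namespace IsRankIso

variable {b₁ b₂ : Bool} {n : ℕ} {F : Finset (Word × Word)} {p q : Word × Word}

theorem drop_mem (hF : IsRankIso b₁ b₂ n F) (hp : p ∈ F) (k : ℕ) :
    (p.1.drop k, p.2.drop k) ∈ F := by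
  induction k with
  | zero => exact hp
  | succ k ih => simpa [List.tail_drop] using hF.tail_mem _ ih

theorem suffix_iff (hF : IsRankIso b₁ b₂ n F) (hp : p ∈ F) (hq : q ∈ F) :
    p.1 <:+ q.1 ↔ p.2 <:+ q.2 := by
  rw [List.suffix_iff_eq_drop, List.suffix_iff_eq_drop, hF.length_eq p hp, hF.length_eq q hq]
  exact hF.fst_eq_iff p hp _ (hF.drop_mem hq _)

theorem nil_iff (hF : IsRankIso b₁ b₂ n F) (hp : p ∈ F) : p.1 = [] ↔ p.2 = [] := by
  rw [← List.length_eq_zero_iff, hF.length_eq p hp, List.length_eq_zero_iff]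

theorem swap (hF : IsRankIso b₁ b₂ n F) : IsRankIso b₂ b₁ n (swapPairs F) where
  nil_mem := mem_swapPairs.2 hF.nil_mem
  tail_mem := by rintro ⟨x, y⟩ h; exact mem_swapPairs.2 (hF.tail_mem _ (mem_swapPairs.1 h))
  valid_fst := by rintro ⟨x, y⟩ h; exact hF.valid_snd _ (mem_swapPairs.1 h)
  valid_snd := by rintro ⟨x, y⟩ h; exact hF.valid_fst _ (mem_swapPairs.1 h)
  length_eq := by rintro ⟨x, y⟩ h; exact (hF.length_eq _ (mem_swapPairs.1 h)).symm
  fst_eq_iff := by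
    rintro ⟨x, y⟩ h ⟨x', y'⟩ h'
    exact (hF.fst_eq_iff _ (mem_swapPairs.1 h) _ (mem_swapPairs.1 h')).symm
  rankSim := by
    rintro ⟨x, y⟩ h
    exact (hF.rankSim _ (mem_swapPairs.1 h)).imp Eq.symm And.symm

theorem exists_fun (hF : IsRankIso b₁ b₂ n F) :
    ∃ f : Word → Word, ∀ p ∈ F, f p.1 = p.2 := by
  classical
  refine ⟨fun x => if h : ∃ y, (x, y) ∈ F then h.choose else x, fun p hp => ?_⟩
  have h : ∃ y, (p.1, y) ∈ F := ⟨p.2, hp⟩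
  dsimp only
  rw [dif_pos h]
  exact (hF.fst_eq_iff _ h.choose_spec _ hp).1 rfl

end IsRankIso

def tagBound (F : Finset (Word × Word)) : ℕ := ∑ p ∈ F, (p.2.map Prod.fst).sum

theorem le_tagBound {F : Finset (Word × Word)} {p : Word × Word} {l : ℕ × Rank} (hp : p ∈ F)
    (hl : l ∈ p.2) : l.1 ≤ tagBound F :=
  (List.le_sum_of_mem (List.mem_map_of_mem hl)).trans
    (Finset.single_le_sum (f := fun p : Word × Word => (p.2.map Prod.fst).sum)
      (fun _ _ => Nat.zero_le _) hp)

/-- A new node `l :: w` is sent below the image of `w`, with a tag that exceeds the tags used by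
`F` and encodes `l` (so the map stays injective), and with rank `min l.2 (ω * n + (K - depth))`,
which agrees with `l.2` below `ω * n` and decreases along branches of depth at most `K`. -/
def extendMap (F : Finset (Word × Word)) (f : Word → Word) (n K : ℕ) : Word → Word
  | [] => f []
  | l :: w =>
    if l :: w ∈ F.image Prod.fst then f (l :: w)
    else (tagBound F + 1 + Encodable.encode l, min l.2 (ord n (K - (w.length + 1)))) ::
      extendMap F f n K w

section extendMap

variable {b₁ b₂ : Bool} {n n' K : ℕ} {F : Finset (Word × Word)} {f : Word → Word}
  {l : ℕ × Rank} {w x : Word}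

theorem extendMap_of_mem (hx : x ∈ F.image Prod.fst) : extendMap F f n K x = f x := by
  cases x
  · rfl
  · exact if_pos hx

theorem extendMap_cons_of_not_mem (h : l :: w ∉ F.image Prod.fst) :
    extendMap F f n K (l :: w) = (tagBound F + 1 + Encodable.encode l,
      min l.2 (ord n (K - (w.length + 1)))) :: extendMap F f n K w :=
  if_neg h

theorem IsRankIso.nil_mem_image (hF : IsRankIso b₁ b₂ n' F) : [] ∈ F.image Prod.fst :=
  Finset.mem_image_of_mem _ hF.nil_mem

theorem IsRankIso.exists_cons_of_not_mem (hF : IsRankIso b₁ b₂ n' F)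
    (hx : x ∉ F.image Prod.fst) : ∃ l w, x = l :: w :=
  List.exists_cons_of_ne_nil fun h => hx (h ▸ hF.nil_mem_image)

theorem mem_of_mem_image (hf : ∀ p ∈ F, f p.1 = p.2) (hx : x ∈ F.image Prod.fst) :
    (x, f x) ∈ F := by
  obtain ⟨p, hp, rfl⟩ := Finset.mem_image.1 hx
  rwa [hf p hp]

theorem length_extendMap (hF : IsRankIso b₁ b₂ n' F) (hf : ∀ p ∈ F, f p.1 = p.2)
    (x : Word) : (extendMap F f n K x).length = x.length := by
  have hD : ∀ x ∈ F.image Prod.fst, (extendMap F f n K x).length = x.length := fun x hx => by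
    rw [extendMap_of_mem hx]
    exact (hF.length_eq _ (mem_of_mem_image hf hx)).symm
  induction x with
  | nil => exact hD [] hF.nil_mem_image
  | cons l w ih =>
    by_cases hx : l :: w ∈ F.image Prod.fst
    · exact hD _ hx
    · rw [extendMap_cons_of_not_mem hx, List.length_cons, List.length_cons, ih]

theorem tail_extendMap (hF : IsRankIso b₁ b₂ n' F) (hf : ∀ p ∈ F, f p.1 = p.2)
    (x : Word) : (extendMap F f n K x).tail = extendMap F f n K x.tail := by
  by_cases hx : x ∈ F.image Prod.fst
  · have hp := hF.tail_mem _ (mem_of_mem_image hf hx)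
    rw [extendMap_of_mem hx, extendMap_of_mem (Finset.mem_image_of_mem _ hp), hf _ hp]
  · obtain ⟨l, w, rfl⟩ := hF.exists_cons_of_not_mem hx
    rw [extendMap_cons_of_not_mem hx, List.tail_cons, List.tail_cons]

theorem extendMap_injective (hF : IsRankIso b₁ b₂ n' F) (hf : ∀ p ∈ F, f p.1 = p.2) :
    Function.Injective (extendMap F f n K) := by
  have hD : ∀ x ∈ F.image Prod.fst, ∀ y,
      extendMap F f n K x = extendMap F f n K y → x = y := by
    intro x hx y h
    by_cases hy : y ∈ F.image Prod.fst
    · rw [extendMap_of_mem hx, extendMap_of_mem hy] at h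
      exact (hF.fst_eq_iff _ (mem_of_mem_image hf hx) _ (mem_of_mem_image hf hy)).2 h
    · obtain ⟨l, w, rfl⟩ := hF.exists_cons_of_not_mem hy
      rw [extendMap_of_mem hx, extendMap_cons_of_not_mem hy] at h
      have := le_tagBound (mem_of_mem_image hf hx) (h ▸ List.mem_cons_self)
      simp only at this
      omega
  intro x
  induction x with
  | nil => exact hD [] hF.nil_mem_image
  | cons l w ih =>
    intro y h
    by_cases hx : l :: w ∈ F.image Prod.fst
    · exact hD _ hx y h
    by_cases hy : y ∈ F.image Prod.fst
    · exact (hD y hy _ h.symm).symm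
    obtain ⟨l', w', rfl⟩ := hF.exists_cons_of_not_mem hy
    rw [extendMap_cons_of_not_mem hx, extendMap_cons_of_not_mem hy, List.cons_eq_cons,
      Prod.mk.injEq] at h
    obtain ⟨⟨htag, -⟩, hw⟩ := h
    rw [Encodable.encode_injective (Nat.add_left_cancel htag), ih hw]

theorem extendMap_cons_rank_lt (hF : IsRankIso b₁ b₂ (n + 1) F) (hf : ∀ p ∈ F, f p.1 = p.2)
    {l : ℕ × Rank} {w : Word} (hx : l :: w ∉ F.image Prod.fst) (hv : Valid b₁ (l :: w))
    (hK : w.length + 1 ≤ K) :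
    min l.2 (ord n (K - (w.length + 1))) < rank (extendMap F f n K w) ∨
      rank (extendMap F f n K w) = ⊤ := by
  by_cases hw : w ∈ F.image Prod.fst
  · rw [extendMap_of_mem hw]
    exact (hF.rankSim _ (mem_of_mem_image hf hw)).min_ord_lt hv.1 _
  · obtain ⟨l', w', rfl⟩ := hF.exists_cons_of_not_mem hw
    rw [extendMap_cons_of_not_mem hw]
    refine Or.inl (min_lt_min_of_lt_or_eq_top hv.1 (ord_lt_ord.2 (Or.inr ⟨rfl, ?_⟩)))
    simp only [List.length_cons] at hK ⊢
    omega

theorem valid_extendMap (hF : IsRankIso b₁ b₂ (n + 1) F) (hf : ∀ p ∈ F, f p.1 = p.2)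
    {x : Word} (hv : Valid b₁ x) (hx : x ∈ F.image Prod.fst ∨ x.length ≤ K) :
    Valid b₂ (extendMap F f n K x) ∧ RankSim n (rank x) (rank (extendMap F f n K x)) := by
  have hD : ∀ x ∈ F.image Prod.fst,
      Valid b₂ (extendMap F f n K x) ∧ RankSim n (rank x) (rank (extendMap F f n K x)) :=
    fun x hx => by
      have hp := mem_of_mem_image hf hx
      rw [extendMap_of_mem hx]
      exact ⟨hF.valid_snd _ hp, (hF.rankSim _ hp).mono n.le_succ⟩
  induction x with
  | nil => exact hD [] hF.nil_mem_image
  | cons l w ih =>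
    by_cases hlw : l :: w ∈ F.image Prod.fst
    · exact hD _ hlw
    have hK : w.length + 1 ≤ K := hx.resolve_left hlw
    rw [extendMap_cons_of_not_mem hlw]
    exact ⟨⟨extendMap_cons_rank_lt hF hf hlw hv hK,
      fun _ => ne_top_of_le_ne_top (ord_ne_top _ _) (min_le_right _ _),
      (ih hv.2.2 (Or.inr (by omega))).1⟩, rankSim_min_ord _ _ _⟩

theorem isRankIso_image_extendMap (hF : IsRankIso b₁ b₂ (n + 1) F)
    (hf : ∀ p ∈ F, f p.1 = p.2) {D : Finset Word} (hnil : [] ∈ D)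
    (htail : ∀ x ∈ D, x.tail ∈ D) (hvalid : ∀ x ∈ D, Valid b₁ x)
    (hlen : ∀ x ∈ D, x ∈ F.image Prod.fst ∨ x.length ≤ K) :
    IsRankIso b₁ b₂ n (D.image fun x => (x, extendMap F f n K x)) where
  nil_mem := Finset.mem_image.2
    ⟨[], hnil, by rw [extendMap_of_mem hF.nil_mem_image, hf _ hF.nil_mem]⟩
  tail_mem := Finset.forall_mem_image.2 fun x hx =>
    Finset.mem_image.2 ⟨x.tail, htail x hx, by rw [tail_extendMap hF hf]⟩
  valid_fst := Finset.forall_mem_image.2 hvalid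
  valid_snd := Finset.forall_mem_image.2 fun x hx =>
    (valid_extendMap hF hf (hvalid x hx) (hlen x hx)).1
  length_eq := Finset.forall_mem_image.2 fun x _ => (length_extendMap hF hf x).symm
  fst_eq_iff := Finset.forall_mem_image.2 fun _ _ => Finset.forall_mem_image.2 fun _ _ =>
    ⟨congrArg _, fun h => extendMap_injective hF hf h⟩
  rankSim := Finset.forall_mem_image.2 fun x hx =>
    (valid_extendMap hF hf (hvalid x hx) (hlen x hx)).2

end extendMap

def wordRel {b₁ b₂ : Bool} (F : Finset (Word × Word)) (a : RankTree b₁) (c : RankTree b₂) :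
    Prop :=
  (a.1, c.1) ∈ F

namespace IsRankIso

variable {b₁ b₂ : Bool} {n : ℕ} {F : Finset (Word × Word)}

theorem exists_extend (hF : IsRankIso b₁ b₂ (n + 1) F) (E : Finset (RankTree b₁)) :
    ∃ F', F ⊆ F' ∧ IsRankIso b₁ b₂ n F' ∧
      ∀ a ∈ E, ∃ c : RankTree b₂, wordRel F' a c := by
  obtain ⟨f, hf⟩ := hF.exists_fun
  set K := E.sup fun a => a.1.length
  set D := F.image Prod.fst ∪ E.biUnion fun a => a.1.tails.toFinset
  have mem_D {x : Word} : x ∈ D ↔ x ∈ F.image Prod.fst ∨ ∃ a ∈ E, x <:+ a.1 := by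
    simp [D]
  have hD : ∀ x ∈ D, Valid b₁ x ∧ (x ∈ F.image Prod.fst ∨ x.length ≤ K) := by
    intro x hx
    rcases mem_D.1 hx with hx | ⟨a, ha, hxa⟩
    · obtain ⟨p, hp, rfl⟩ := Finset.mem_image.1 hx
      exact ⟨hF.valid_fst p hp, Or.inl hx⟩
    · exact ⟨a.2.of_suffix hxa,
        Or.inr (hxa.length_le.trans (Finset.le_sup (f := fun a => a.1.length) ha))⟩
  have htail : ∀ x ∈ D, x.tail ∈ D := by
    intro x hx
    rcases mem_D.1 hx with hx | ⟨a, ha, hxa⟩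
    · obtain ⟨p, hp, rfl⟩ := Finset.mem_image.1 hx
      exact mem_D.2 (Or.inl (Finset.mem_image_of_mem _ (hF.tail_mem p hp)))
    · exact mem_D.2 (Or.inr ⟨a, ha, (List.tail_suffix x).trans hxa⟩)
  have hF' := isRankIso_image_extendMap (K := K) hF hf (mem_D.2 (Or.inl hF.nil_mem_image)) htail
    (fun x hx => (hD x hx).1) (fun x hx => (hD x hx).2)
  refine ⟨_, fun p hp => ?_, hF', fun a ha => ?_⟩
  · have hp' := Finset.mem_image_of_mem Prod.fst hp
    exact Finset.mem_image.2 ⟨p.1, mem_D.2 (Or.inl hp'), by rw [extendMap_of_mem hp', hf p hp]⟩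
  · have hmem := Finset.mem_image_of_mem (fun x => (x, extendMap F f n K x))
      (mem_D.2 (Or.inr ⟨a, ha, List.suffix_refl _⟩))
    exact ⟨⟨_, hF'.valid_snd _ hmem⟩, hmem⟩

theorem isPartialIso (hF : IsRankIso b₁ b₂ n F) :
    IsPartialIso treeLang (wordRel (b₁ := b₁) (b₂ := b₂) F) :=
  isPartialIso_treeLang
    ⟨fun _ _ _ h h' => Subtype.ext ((hF.fst_eq_iff _ h _ h').2 rfl),
      fun _ _ _ h h' => Subtype.ext ((hF.fst_eq_iff _ h _ h').1 rfl)⟩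
    (fun _ _ _ _ h h' => hF.suffix_iff h h')
    (fun _ _ h => by rw [RankTree.eq_bot_iff_val, RankTree.eq_bot_iff_val]; exact hF.nil_iff h)

end IsRankIso

theorem rankTree_companion_elementarilyEquivalent (b₁ b₂ : Bool) :
    (RankTree b₁ ⊕ Finset (RankTree b₁)) ≅[msoLang treeLang]
      (RankTree b₂ ⊕ Finset (RankTree b₂)) := by
  refine companion_elementarilyEquivalent
    (fun n R => ∃ F, IsRankIso b₁ b₂ n F ∧ R = wordRel F)
    (fun n R ⟨F, hF, hR⟩ => hR ▸ hF.isPartialIso) ?_ ?_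
    fun n => ⟨_, _, isRankIso_singleton b₁ b₂ n, rfl⟩
  · rintro n _ ⟨F, hF, rfl⟩ E
    obtain ⟨F', hFF', hF', hcov⟩ := hF.exists_extend E
    exact ⟨wordRel F', fun _ _ h => hFF' h, ⟨F', hF', rfl⟩, hcov⟩
  · rintro n _ ⟨F, hF, rfl⟩ E
    obtain ⟨F', hFF', hF', hcov⟩ := hF.swap.exists_extend E
    refine ⟨wordRel (swapPairs F'), fun _ _ h => mem_swapPairs.2 (hFF' (mem_swapPairs.2 h)),
      ⟨_, hF'.swap, rfl⟩, fun c hc => ?_⟩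
    obtain ⟨a, ha⟩ := hcov c hc
    exact ⟨a, mem_swapPairs.2 ha⟩

/-- the existence of an infinite branch is not expressible in weak monadic
second-order logic: no first-order sentence over the weak-MSO companion language of trees
holds in the weak-MSO companion of a tree `V` exactly when `V` has an infinite branch. -/
theorem infinite_branch_not_weakMSO_expressible :
    ¬ ∃ φ : (msoLang treeLang).Sentence,
        ∀ (V : Type) [PartialOrder V] [OrderBot V], IsTree V →
          ((V ⊕ Finset V) ⊨ φ ↔ ∃ f : ℕ → V, StrictMono f) := by
  rintro ⟨φ, hφ⟩
  have h_true := hφ (RankTree true) RankTree.isTree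
  have h_false := hφ (RankTree false) RankTree.isTree
  have h_equiv := rankTree_companion_elementarilyEquivalent false true
  exact RankTree.not_exists_strictMono_of_false
    (h_false.1 ((h_equiv.realize_sentence φ).2 (h_true.2 RankTree.exists_strictMono_of_true)))

end Paper
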